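/- arXiv:2007.00103 — 3 statements merged into one kernel-verified Lean document; each statement's English description precedes it below -/
import Mathlib

section
/- Let $G$ act on $G \times G$ by $g\cdot(a,b) = (g a \tau(g^{-1}),\ g b \kappa(g^{-1}))$, and define $\Phi(a,b) = \Phi_1(a,b)\, (\tau\kappa)(\Phi_2(a,b))$ where $\Phi_1(a,b) = a\tau(b)$ and $\Phi_2(a,b) = \tau^{-1}(a^{-1}\kappa^{-1}(b^{-1}))$. Then $\Phi$ is equivariant with respect to the $[\tau,\kappa]$-twisted conjugation action: $\Phi(g\cdot(a,b)) = g\, \Phi(a,b)\, [\tau,\kappa](g^{-1})$, where $[\tau,\kappa] = \tau\kappa\tau^{-1}\kappa^{-1}$. -/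
/-- The component maps of the twisted double. -/
def fusedPhi {G : Type*} [Group G] (τ κ : MulAut G) (a b : G) : G :=
  (a * τ b) * (τ (κ ((τ⁻¹ : MulAut G) (a⁻¹ * (κ⁻¹ : MulAut G) b⁻¹))))

/-- Moment map equivariance of the fused double `𝔻_φ(G)`: with
`Φ(a,b) = Φ₁(a,b) (τκ)(Φ₂(a,b))`, `Φ₁(a,b) = a τ(b)`,
`Φ₂(a,b) = τ⁻¹(a⁻¹ κ⁻¹(b⁻¹))`, and the action `g·(a,b) = (g a τ(g⁻¹), g b κ(g⁻¹))`,
one has `Φ(g·(a,b)) = g Φ(a,b) [τ,κ](g⁻¹)` where `[τ,κ] = τκτ⁻¹κ⁻¹`. -/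
theorem fused_double_moment_map_equivariant (G : Type*) [Group G] (τ κ : MulAut G) :
    ∀ g a b : G,
      fusedPhi τ κ (g * a * τ g⁻¹) (g * b * κ g⁻¹) =
        g * fusedPhi τ κ a b * (τ (κ ((τ⁻¹ : MulAut G) ((κ⁻¹ : MulAut G) g⁻¹)))) := by
  intro g a b
  simp only [fusedPhi, map_mul, map_inv, mul_inv_rev, MulAut.apply_inv_self,
    MulAut.inv_apply_self, mul_assoc]
  group
end

section
/- Convolution of twining characters: let $G$ be a compact group with normalized Haar measure, and let $(\rho, V)$ be an irreducible unitary representation admitting unitary implementations $U_{\kappa}$ of $\kappa$ and $U_{\tau}$ of $\tau$, compatibly chosen so that $U_{\tau}U_{\kappa}$ implements $\tau\kappa$. Then for all $x \in G$: $\int_G \tilde{\chi}^{\kappa}(x g^{-1})\,\tilde{\chi}^{\tau}(g)\,dg = (\dim V)^{-1}\,\mathrm{tr}\big(U_{\tau}U_{\kappa}\,\rho(x)\big)$, where $\tilde{\chi}^{\kappa}(h) = \mathrm{tr}(U_{\kappa}\rho(h))$ and $\tilde{\chi}^{\tau}(h) = \mathrm{tr}(U_{\tau}\rho(h))$. -/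
open MeasureTheory LinearMap

/-- Convolution of twining characters: for an irreducible unitary representation of a
compact group admitting unitary implementations `Uκ` of `κ` and `Uτ` of `τ`,
`(χ̃^κ * χ̃^τ)(x) = ∫ χ̃^κ(x g⁻¹) χ̃^τ(g) dg = (dim V)⁻¹ tr (Uτ Uκ ρ(x))`. -/
theorem twining_char_convolution
    (G : Type) [Group G] [TopologicalSpace G] [IsTopologicalGroup G] [CompactSpace G]
    [MeasurableSpace G] [BorelSpace G]
    (μ : Measure G) [μ.IsHaarMeasure] [IsProbabilityMeasure μ]
    (κ τ : G ≃* G) (hκc : Continuous κ) (hτc : Continuous τ)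
    (V : Type) [NormedAddCommGroup V] [InnerProductSpace ℂ V] [FiniteDimensional ℂ V]
    (ρ : G →* (V →ₗ[ℂ] V))
    (hu : ∀ (g : G) (v w : V), (inner ℂ (ρ g v) (ρ g w) : ℂ) = inner ℂ v w)
    (hc : ∀ v : V, Continuous fun g => ρ g v)
    (hirr : ∀ U : Submodule ℂ V, (∀ g : G, ∀ v ∈ U, ρ g v ∈ U) → U = ⊥ ∨ U = ⊤)
    (Uκ Uτ : V ≃ₗ[ℂ] V)
    (hUκu : ∀ v w : V, (inner ℂ (Uκ v) (Uκ w) : ℂ) = inner ℂ v w)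
    (hUτu : ∀ v w : V, (inner ℂ (Uτ v) (Uτ w) : ℂ) = inner ℂ v w)
    (hUκ : ∀ g : G, ρ (κ g) = Uκ.toLinearMap ∘ₗ ρ g ∘ₗ Uκ.symm.toLinearMap)
    (hUτ : ∀ g : G, ρ (τ g) = Uτ.toLinearMap ∘ₗ ρ g ∘ₗ Uτ.symm.toLinearMap) :
    ∀ x : G,
      ∫ g, trace ℂ V (Uκ.toLinearMap ∘ₗ ρ (x * g⁻¹)) *
          trace ℂ V (Uτ.toLinearMap ∘ₗ ρ g) ∂μ =
        (Module.finrank ℂ V : ℂ)⁻¹ *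
          trace ℂ V (Uτ.toLinearMap ∘ₗ Uκ.toLinearMap ∘ₗ ρ x) := by
  intro x
  -- the Haar measure on a compact group is right invariant
  haveI hright : μ.IsMulRightInvariant := by
    constructor
    intro h
    haveI : IsProbabilityMeasure (μ.map (· * h)) :=
      Measure.isProbabilityMeasure_map (measurable_mul_const h).aemeasurable
    exact Measure.isHaarMeasure_eq_of_isProbabilityMeasure (μ.map (· * h)) μ
  rcases subsingleton_or_nontrivial V with hV | hV
  · have hz : ∀ f : V →ₗ[ℂ] V, trace ℂ V f = 0 := fun f => by
      rw [Subsingleton.elim f 0, map_zero]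
    simp [hz]
  -- basic helpers
  have hinv : ∀ (g : G) (u : V), ρ g⁻¹ (ρ g u) = u := by
    intro g u
    have : ρ g⁻¹ * ρ g = 1 := by rw [← map_mul, inv_mul_cancel, map_one]
    calc ρ g⁻¹ (ρ g u) = (ρ g⁻¹ * ρ g) u := rfl
      _ = u := by rw [this]; rfl
  have hn0 : (Module.finrank ℂ V : ℂ) ≠ 0 :=
    Nat.cast_ne_zero.2 Module.finrank_pos.ne'
  set b := stdOrthonormalBasis ℂ V with hb
  have hlin : ∀ f : V →ₗ[ℂ] V, Continuous f := fun f =>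
    f.continuous_of_finiteDimensional
  have hciC : ∀ f : G → ℂ, Continuous f → Integrable f μ := fun f hf =>
    hf.integrable_of_hasCompactSupport (HasCompactSupport.of_compactSpace f)
  have hciV : ∀ f : G → V, Continuous f → Integrable f μ := fun f hf =>
    hf.integrable_of_hasCompactSupport (HasCompactSupport.of_compactSpace f)
  -- trace via the orthonormal basis
  have htr : ∀ f : V →ₗ[ℂ] V, trace ℂ V f = ∑ i, (inner ℂ (b i) (f (b i)) : ℂ) := by
    intro f
    rw [trace_eq_matrix_trace ℂ b.toBasis, Matrix.trace]
    congr 1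
    funext i
    rw [Matrix.diag_apply, LinearMap.toMatrix_apply, OrthonormalBasis.coe_toBasis,
      OrthonormalBasis.coe_toBasis_repr_apply, OrthonormalBasis.repr_apply_apply]
  -- Schur orthogonality of matrix coefficients
  have key : ∀ v w a c : V,
      ∫ g, (inner ℂ w (ρ g c) : ℂ) * (inner ℂ a (ρ g⁻¹ v) : ℂ) ∂μ =
        (inner ℂ w v : ℂ) * (inner ℂ a c : ℂ) / (Module.finrank ℂ V : ℂ) := by
    intro v w
    set F : V → G → V := fun c g => (inner ℂ w (ρ g c) : ℂ) • ρ g⁻¹ v with hF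
    have hFc : ∀ c, Continuous (F c) := fun c =>
      (continuous_const.inner (hc c)).smul ((hc v).comp continuous_inv)
    have hFi : ∀ c, Integrable (F c) μ := fun c => hciV _ (hFc c)
    set T : V →ₗ[ℂ] V :=
      { toFun := fun c => ∫ g, F c g ∂μ
        map_add' := by
          intro c₁ c₂
          show (∫ g, F (c₁ + c₂) g ∂μ) = (∫ g, F c₁ g ∂μ) + ∫ g, F c₂ g ∂μ
          have : F (c₁ + c₂) = fun g => F c₁ g + F c₂ g := by
            funext g
            simp only [hF, map_add, inner_add_right, add_smul]
          rw [this, integral_add (hFi c₁) (hFi c₂)]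
        map_smul' := by
          intro m c
          show (∫ g, F (m • c) g ∂μ) = m • ∫ g, F c g ∂μ
          have : F (m • c) = fun g => m • F c g := by
            funext g
            simp only [hF, _root_.map_smul, inner_smul_right, mul_smul]
          rw [this, integral_smul] } with hT
    have hTapp : ∀ c, T c = ∫ g, F c g ∂μ := fun c => rfl
    have hTcomm : ∀ (h : G) (u : V), T (ρ h u) = ρ h (T u) := by
      intro h u
      have h1 : ρ h (T u) = ∫ g, ρ h (F u g) ∂μ := by
        rw [hTapp]
        exact ((LinearMap.toContinuousLinearMap (ρ h)).integral_comp_comm (hFi u)).symm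
      set f : G → V := fun g => (inner ℂ w (ρ g u) : ℂ) • ρ (h * g⁻¹) v with hf
      have h2 : ∫ g, ρ h (F u g) ∂μ = ∫ g, f g ∂μ := by
        congr 1
        funext g
        simp only [hF, hf, _root_.map_smul, _root_.map_mul, Module.End.mul_apply]
      have h3 : ∫ g, f g ∂μ = ∫ g, f (g * h) ∂μ := (integral_mul_right_eq_self f h).symm
      have h4 : ∀ g, f (g * h) = F (ρ h u) g := by
        intro g
        simp only [hf, hF]
        congr 1
        · rw [_root_.map_mul]
          rfl
        · congr 1
          group
      rw [hTapp, h1, h2, h3]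
      congr 1
      funext g
      rw [h4]
    obtain ⟨ev, hev⟩ := Module.End.exists_eigenvalue (T : Module.End ℂ V)
    have hsub : ∀ g : G, ∀ u ∈ Module.End.eigenspace T ev, ρ g u ∈ Module.End.eigenspace T ev := by
      intro g u hu'
      rw [Module.End.mem_eigenspace_iff] at hu' ⊢
      rw [hTcomm g u, hu', _root_.map_smul]
    have htop : Module.End.eigenspace T ev = ⊤ := by
      rcases hirr _ hsub with h | h
      · exact absurd h hev
      · exact h
    have hTeq : ∀ u, T u = ev • u := by
      intro u
      have : u ∈ Module.End.eigenspace T ev := by rw [htop]; trivial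
      exact Module.End.mem_eigenspace_iff.mp this
    have htrT : trace ℂ V T = (inner ℂ w v : ℂ) := by
      rw [htr T]
      have e1 : ∀ i, (inner ℂ (b i) (T (b i)) : ℂ) =
          ∫ g, (inner ℂ w (ρ g (b i)) : ℂ) * (inner ℂ (b i) (ρ g⁻¹ v) : ℂ) ∂μ := by
        intro i
        rw [hTapp, ← integral_inner (hFi (b i)) (b i)]
        congr 1
        funext g
        rw [inner_smul_right]
      rw [Finset.sum_congr rfl fun i _ => e1 i, ← integral_finset_sum]
      · have e2 : ∀ g : G,
            ∑ i, (inner ℂ w (ρ g (b i)) : ℂ) * (inner ℂ (b i) (ρ g⁻¹ v) : ℂ) = (inner ℂ w v : ℂ) := by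
          intro g
          have e3 : ∀ i, (inner ℂ w (ρ g (b i)) : ℂ) = inner ℂ (ρ g⁻¹ w) (b i) := by
            intro i
            conv_lhs => rw [← hu g⁻¹ w (ρ g (b i)), hinv]
          simp_rw [e3]
          rw [b.sum_inner_mul_inner, hu]
        simp_rw [e2]
        simp
      · intro i _
        exact hciC _ ((continuous_const.inner (hc (b i))).mul
          (continuous_const.inner ((hc v).comp continuous_inv)))
    have hev' : ev = (inner ℂ w v : ℂ) / (Module.finrank ℂ V : ℂ) := by
      have hTid : T = ev • (LinearMap.id : V →ₗ[ℂ] V) := by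
        ext u
        simpa using hTeq u
      have : (inner ℂ w v : ℂ) = ev * (Module.finrank ℂ V : ℂ) := by
        rw [← htrT, hTid, _root_.map_smul, trace_id, smul_eq_mul]
      rw [this]
      field_simp
    intro a c
    have h5 : (inner ℂ a (T c) : ℂ) =
        ∫ g, (inner ℂ w (ρ g c) : ℂ) * (inner ℂ a (ρ g⁻¹ v) : ℂ) ∂μ := by
      rw [hTapp, ← integral_inner (hFi c) a]
      congr 1
      funext g
      rw [inner_smul_right]
    rw [← h5, hTeq c, inner_smul_right, hev']
    ring
  -- assemble
  set A : V →ₗ[ℂ] V := Uτ.toLinearMap with hA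
  set C : V →ₗ[ℂ] V := Uκ.toLinearMap ∘ₗ ρ x with hC
  have hAC : ∀ g : G, trace ℂ V (Uκ.toLinearMap ∘ₗ ρ (x * g⁻¹)) =
      ∑ i, (inner ℂ (b i) (C (ρ g⁻¹ (b i))) : ℂ) := by
    intro g
    rw [htr]
    congr 1
    funext i
    congr 1
    show (Uκ.toLinearMap ∘ₗ ρ (x * g⁻¹)) (b i) = (Uκ.toLinearMap ∘ₗ ρ x) (ρ g⁻¹ (b i))
    simp only [LinearMap.comp_apply, _root_.map_mul, Module.End.mul_apply]
  have hACτ : ∀ g : G, trace ℂ V (Uτ.toLinearMap ∘ₗ ρ g) =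
      ∑ j, (inner ℂ (b j) (A (ρ g (b j))) : ℂ) := by
    intro g
    rw [htr]
    rfl
  have hterm : ∀ (i j : Fin (Module.finrank ℂ V)),
      ∫ g, (inner ℂ (b i) (C (ρ g⁻¹ (b i))) : ℂ) * (inner ℂ (b j) (A (ρ g (b j))) : ℂ) ∂μ =
        (inner ℂ (b j) (A (b i)) : ℂ) * (inner ℂ (b i) (C (b j)) : ℂ) /
          (Module.finrank ℂ V : ℂ) := by
    intro i j
    have e1 : ∀ g : G, (inner ℂ (b i) (C (ρ g⁻¹ (b i))) : ℂ) * (inner ℂ (b j) (A (ρ g (b j))) : ℂ) =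
        (inner ℂ (LinearMap.adjoint A (b j)) (ρ g (b j)) : ℂ) *
          (inner ℂ (LinearMap.adjoint C (b i)) (ρ g⁻¹ (b i)) : ℂ) := by
      intro g
      rw [LinearMap.adjoint_inner_left, LinearMap.adjoint_inner_left, mul_comm]
    simp_rw [e1]
    rw [key (b i) (LinearMap.adjoint A (b j)) (LinearMap.adjoint C (b i)) (b j),
      LinearMap.adjoint_inner_left, LinearMap.adjoint_inner_left]
  have hintij : ∀ (i j : Fin (Module.finrank ℂ V)), Integrable
      (fun g => (inner ℂ (b i) (C (ρ g⁻¹ (b i))) : ℂ) * (inner ℂ (b j) (A (ρ g (b j))) : ℂ)) μ := by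
    intro i j
    exact hciC _ ((continuous_const.inner ((hlin C).comp ((hc (b i)).comp continuous_inv))).mul
      (continuous_const.inner ((hlin A).comp (hc (b j)))))
  calc ∫ g, trace ℂ V (Uκ.toLinearMap ∘ₗ ρ (x * g⁻¹)) * trace ℂ V (Uτ.toLinearMap ∘ₗ ρ g) ∂μ
      = ∫ g, ∑ i, ∑ j,
          (inner ℂ (b i) (C (ρ g⁻¹ (b i))) : ℂ) * (inner ℂ (b j) (A (ρ g (b j))) : ℂ) ∂μ := by
        congr 1
        funext g
        rw [hAC g, hACτ g, Finset.sum_mul_sum]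
    _ = ∑ i, ∑ j, ∫ g,
          (inner ℂ (b i) (C (ρ g⁻¹ (b i))) : ℂ) * (inner ℂ (b j) (A (ρ g (b j))) : ℂ) ∂μ := by
        rw [integral_finset_sum _ fun i _ => integrable_finset_sum _ fun j _ => hintij i j]
        exact Finset.sum_congr rfl fun i _ => integral_finset_sum _ fun j _ => hintij i j
    _ = ∑ i, ∑ j, (inner ℂ (b j) (A (b i)) : ℂ) * (inner ℂ (b i) (C (b j)) : ℂ) /
          (Module.finrank ℂ V : ℂ) := by
        exact Finset.sum_congr rfl fun i _ => Finset.sum_congr rfl fun j _ => hterm i j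
    _ = (Module.finrank ℂ V : ℂ)⁻¹ * trace ℂ V (Uτ.toLinearMap ∘ₗ Uκ.toLinearMap ∘ₗ ρ x) := by
        rw [Finset.sum_comm]
        have e4 : ∀ j, ∑ i, (inner ℂ (b j) (A (b i)) : ℂ) * (inner ℂ (b i) (C (b j)) : ℂ) /
            (Module.finrank ℂ V : ℂ) =
            (inner ℂ (b j) ((A ∘ₗ C) (b j)) : ℂ) / (Module.finrank ℂ V : ℂ) := by
          intro j
          rw [← Finset.sum_div]
          congr 1
          have e5 : ∀ i, (inner ℂ (b j) (A (b i)) : ℂ) =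
              inner ℂ (LinearMap.adjoint A (b j)) (b i) := fun i =>
            (LinearMap.adjoint_inner_left A (b i) (b j)).symm
          simp_rw [e5]
          rw [b.sum_inner_mul_inner, LinearMap.adjoint_inner_left]
          rfl
        simp_rw [e4]
        rw [← Finset.sum_div, ← htr (A ∘ₗ C), div_eq_inv_mul]
end

section
/- Twisted averaging of a matrix coefficient yields the twining character: let $G$ be a compact group with normalized Haar measure, $(\rho, V)$ an irreducible unitary representation with a unitary implementation $U$ of an automorphism $\kappa$, and $v \in V$ a unit vector with $Uv = v$. Setting $\Delta(g) = \langle v, \rho(g)v \rangle$, one has for all $x \in G$: $\int_G \Delta\big(g x \kappa(g^{-1})\big)\,dg = (\dim V)^{-1}\,\mathrm{tr}\big(U\rho(x)\big)$. -/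
open MeasureTheory LinearMap

private lemma cont_integrable_aux {G E : Type*} [TopologicalSpace G] [CompactSpace G]
    [MeasurableSpace G] [BorelSpace G]
    [NormedAddCommGroup E] {μ : Measure G} [IsFiniteMeasureOnCompacts μ]
    {f : G → E} (hf : Continuous f) : Integrable f μ := by
  rw [← integrableOn_univ]
  exact hf.continuousOn.integrableOn_compact' isCompact_univ MeasurableSet.univ

/-- Twisted averaging of a matrix coefficient yields the twining character: for an
irreducible unitary representation `ρ` of a compact group with a unitary
implementation `U` of `κ` fixing a unit vector `v`, and `Δ(g) = ⟨v, ρ(g) v⟩`,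
`∫ Δ(g x κ(g⁻¹)) dg = (dim V)⁻¹ tr (U ρ(x))`. -/
theorem twisted_average_matrix_coefficient
    (G : Type) [Group G] [TopologicalSpace G] [IsTopologicalGroup G] [CompactSpace G]
    [MeasurableSpace G] [BorelSpace G]
    (μ : Measure G) [μ.IsHaarMeasure] [IsProbabilityMeasure μ]
    (κ : G ≃* G) (hκc : Continuous κ)
    (V : Type) [NormedAddCommGroup V] [InnerProductSpace ℂ V] [FiniteDimensional ℂ V]
    (ρ : G →* (V →ₗ[ℂ] V))
    (hu : ∀ (g : G) (v w : V), (inner ℂ (ρ g v) (ρ g w) : ℂ) = inner ℂ v w)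
    (hc : ∀ v : V, Continuous fun g => ρ g v)
    (hirr : ∀ U : Submodule ℂ V, (∀ g : G, ∀ v ∈ U, ρ g v ∈ U) → U = ⊥ ∨ U = ⊤)
    (U : V ≃ₗ[ℂ] V)
    (hUu : ∀ v w : V, (inner ℂ (U v) (U w) : ℂ) = inner ℂ v w)
    (hU : ∀ g : G, ρ (κ g) = U.toLinearMap ∘ₗ ρ g ∘ₗ U.symm.toLinearMap)
    (v : V) (hv : ‖v‖ = 1) (hUv : U v = v) :
    ∀ x : G,
      ∫ g, (inner ℂ v (ρ (g * x * κ g⁻¹) v) : ℂ) ∂μ =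
        (Module.finrank ℂ V : ℂ)⁻¹ * trace ℂ V (U.toLinearMap ∘ₗ ρ x) := by
  intro x
  have hvne : v ≠ 0 := by
    intro h; rw [h, norm_zero] at hv; norm_num at hv
  have hVnt : Nontrivial V := ⟨v, 0, hvne⟩
  have hUv' : U.symm v = v := by
    conv_lhs => rw [← hUv]
    exact U.symm_apply_apply v
  -- the conjugated operator family
  set B : V →ₗ[ℂ] V := ρ x ∘ₗ U.toLinearMap with hB
  set F : G → (V →ₗ[ℂ] V) := fun g => ρ g ∘ₗ B ∘ₗ ρ g⁻¹ with hF
  -- ρ g⁻¹ ∘ ρ g = id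
  have hinvcomp : ∀ g : G, ρ g⁻¹ ∘ₗ ρ g = LinearMap.id := by
    intro g
    have : ρ g⁻¹ * ρ g = 1 := by rw [← map_mul, inv_mul_cancel, map_one]
    simpa [Module.End.mul_eq_comp, Module.End.one_eq_id] using this
  -- continuity of g ↦ F g w
  let b := stdOrthonormalBasis ℂ V
  have hFw : ∀ (g : G) (w : V),
      F g w = ∑ i, (inner ℂ (b i) (ρ g⁻¹ w) : ℂ) • ρ g (B (b i)) := by
    intro g w
    have h1 : ρ g⁻¹ w = ∑ i, (inner ℂ (b i) (ρ g⁻¹ w) : ℂ) • b i := (b.sum_repr' _).symm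
    have : F g w = ρ g (B (ρ g⁻¹ w)) := rfl
    rw [this]
    conv_lhs => rw [h1]
    simp [map_sum, _root_.map_smul]
  have hFc : ∀ w : V, Continuous fun g => F g w := by
    intro w
    have : (fun g => F g w)
        = fun g => ∑ i, (inner ℂ (b i) (ρ g⁻¹ w) : ℂ) • ρ g (B (b i)) := by
      funext g; exact hFw g w
    rw [this]
    refine continuous_finset_sum _ (fun i _ => Continuous.smul ?_ (hc _))
    exact Continuous.inner continuous_const ((hc w).comp continuous_inv)
  have hFint : ∀ w : V, Integrable (fun g => F g w) μ :=
    fun w => cont_integrable_aux (hFc w)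
  -- the averaged operator
  set T : V →ₗ[ℂ] V :=
    { toFun := fun w => ∫ g, F g w ∂μ
      map_add' := fun u w => by
        simp_rw [map_add]
        exact integral_add (hFint u) (hFint w)
      map_smul' := fun c w => by
        simp_rw [_root_.map_smul, RingHom.id_apply]
        exact integral_smul c _ } with hT
  have hTapp : ∀ w : V, T w = ∫ g, F g w ∂μ := fun w => rfl
  -- T intertwines ρ
  have hcomm : ∀ h : G, ρ h ∘ₗ T = T ∘ₗ ρ h := by
    intro h
    ext w
    have hL : ρ h (T w) = ∫ g, ρ h (F g w) ∂μ := by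
      have := (LinearMap.toContinuousLinearMap (ρ h)).integral_comp_comm (hFint w)
      rw [hTapp]; simpa using this.symm
    have hpt : ∀ g : G, ρ h (F g w) = F (h * g) (ρ h w) := by
      intro g
      have : ρ (h * g)⁻¹ (ρ h w) = ρ g⁻¹ w := by
        have : ρ (h * g)⁻¹ ∘ₗ ρ h = ρ g⁻¹ := by
          rw [← Module.End.mul_eq_comp, ← map_mul]; congr 1; group
        exact congrFun (congrArg (fun f => (DFunLike.coe f : V → V)) this) w
      simp only [hF]
      simp only [LinearMap.comp_apply, this, map_mul, Module.End.mul_apply]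
    have hL2 : (∫ g, F (h * g) (ρ h w) ∂μ) = ∫ g, F g (ρ h w) ∂μ :=
      integral_mul_left_eq_self (fun g => F g (ρ h w)) h
    simp only [LinearMap.comp_apply]
    rw [show (ρ h) (T w) = ∫ (g : G), (ρ h) ((F g) w) ∂μ from hL, hTapp]
    simp_rw [hpt]
    exact hL2
  -- Schur's lemma: T is a scalar
  obtain ⟨c, hcev⟩ := Module.End.exists_eigenvalue T
  have hsub : ∀ g : G, ∀ u ∈ Module.End.eigenspace T c, ρ g u ∈ Module.End.eigenspace T c := by
    intro g u hu'
    rw [Module.End.mem_eigenspace_iff] at hu' ⊢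
    have h1 : ρ g (T u) = T (ρ g u) := congrFun (congrArg (fun f => (DFunLike.coe f : V → V)) (hcomm g)) u
    rw [← h1, hu', _root_.map_smul]
  have htop : Module.End.eigenspace T c = ⊤ := by
    rcases hirr _ hsub with h | h
    · exact absurd h hcev
    · exact h
  have hTc : ∀ u : V, T u = c • u := by
    intro u
    have : u ∈ Module.End.eigenspace T c := htop ▸ Submodule.mem_top
    exact Module.End.mem_eigenspace_iff.mp this
  -- trace via orthonormal basis
  have htr : ∀ f : V →ₗ[ℂ] V, trace ℂ V f = ∑ i, (inner ℂ (b i) (f (b i)) : ℂ) := by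
    intro f
    rw [trace_eq_matrix_trace ℂ b.toBasis f, Matrix.trace]
    congr 1
    funext i
    rw [Matrix.diag_apply, LinearMap.toMatrix_apply, b.coe_toBasis, b.coe_toBasis_repr_apply,
      b.repr_apply_apply]
  -- trace of F g equals trace of B
  have htrF : ∀ g : G, trace ℂ V (F g) = trace ℂ V B := by
    intro g
    have : F g = ρ g ∘ₗ (B ∘ₗ ρ g⁻¹) := rfl
    rw [this, trace_comp_comm', LinearMap.comp_assoc, hinvcomp, LinearMap.comp_id]
  -- trace of T equals trace of B
  have htrT : trace ℂ V T = trace ℂ V B := by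
    rw [htr T]
    have : ∀ i, (inner ℂ (b i) (T (b i)) : ℂ) = ∫ g, (inner ℂ (b i) (F g (b i)) : ℂ) ∂μ := by
      intro i
      rw [hTapp]
      exact (integral_inner (hFint (b i)) (b i)).symm
    simp_rw [this]
    rw [← integral_finset_sum]
    · have : ∀ g : G, (∑ i, (inner ℂ (b i) (F g (b i)) : ℂ)) = trace ℂ V B := by
        intro g
        rw [← htr (F g), htrF g]
      simp_rw [this, integral_const, probReal_univ, one_smul]
    · intro i _
      exact cont_integrable_aux (Continuous.inner continuous_const (hFc (b i)))
  -- trace of T via c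
  have hdim : (Module.finrank ℂ V : ℂ) ≠ 0 := by
    have : 0 < Module.finrank ℂ V := Module.finrank_pos
    exact_mod_cast this.ne'
  have htrTc : trace ℂ V T = c * (Module.finrank ℂ V : ℂ) := by
    have : T = c • (LinearMap.id : V →ₗ[ℂ] V) := by
      ext u; simp [hTc u]
    rw [this, LinearMap.map_smul, trace_id]
    simp [smul_eq_mul]
  have hc' : c = (Module.finrank ℂ V : ℂ)⁻¹ * trace ℂ V B := by
    rw [← htrT, htrTc]
    field_simp
  -- LHS equals ⟪v, T v⟫ = c
  have hint : ∀ g : G, (inner ℂ v (ρ (g * x * κ g⁻¹) v) : ℂ) = inner ℂ v (F g v) := by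
    intro g
    congr 1
    have h1 : ρ (κ g⁻¹) v = U (ρ g⁻¹ v) := by
      rw [hU g⁻¹]
      simp [hUv']
    simp only [map_mul, Module.End.mul_apply, h1]
    rfl
  have hLHS : (∫ g, (inner ℂ v (ρ (g * x * κ g⁻¹) v) : ℂ) ∂μ) = inner ℂ v (T v) := by
    simp_rw [hint]
    rw [hTapp]
    exact integral_inner (hFint v) v
  rw [hLHS, hTc v, inner_smul_right]
  have hvv : (inner ℂ v v : ℂ) = 1 := by
    rw [inner_self_eq_norm_sq_to_K, hv]
    norm_num
  rw [hvv, mul_one, hc']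
  congr 1
  rw [hB, trace_comp_comm']
end
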